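/- (Proposition 1, structure of the optimum, well-definedness) Let N ≥ 2, 1/N = p_l < p_h < 1, integers 1 ≤ t < T, and suppose the linear program is feasible, i.e., ((T−t)/T)·Σ_{k ≤ k₀} [τ_d·μ(k;t) − τ_c·λ(k;t)] ≥ τ_d − τ_c where k₀ = max{k : τ_d·μ(k;t) − τ_c·λ(k;t) > 0}. Define k̄ = min{k′ : ((T−t)/T)·Σ_{k ≤ k′} [τ_d·μ(k;t) − τ_c·λ(k;t)] ≥ τ_d − τ_c}. Then k̄ exists, 0 ≤ k̄ ≤ k₀, and the rule f* defined by f*(k) = 1 for k < k̄, f*(k) = 0 for k > k̄, and f*(k̄) = [ (T/(T−t))·(τ_d − τ_c) − Σ_{k=0}^{k̄−1} (τ_d·μ(k;t) − τ_c·λ(k;t)) ] / (τ_d·μ(k̄;t) − τ_c·λ(k̄;t)) satisfies 0 ≤ f*(k̄) ≤ 1 and satisfies the incentive constraint with equality: ((T−t)/T)·Σ_{k=0}^t [τ_d μ(k;t) − τ_c λ(k;t)] f*(k) = τ_d − τ_c. In particular f* is a feasible intervention rule. -/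

import Mathlib

open Finset

/-- `lam N t pl k` is the probability of `k` idle signals out of `t` when all `N`
users transmit with probability `pl`. -/
noncomputable def lam (N t : ℕ) (pl : ℝ) (k : ℕ) : ℝ :=
  (t.choose k : ℝ) * ((1 - pl) ^ N) ^ k * (1 - (1 - pl) ^ N) ^ (t - k)

/-- `mu N t pl ph k` is the probability of `k` idle signals out of `t` when exactly
one user transmits with probability `ph` and the others with `pl`. -/
noncomputable def mu (N t : ℕ) (pl ph : ℝ) (k : ℕ) : ℝ :=
  (t.choose k : ℝ) * ((1 - pl) ^ (N - 1) * (1 - ph)) ^ k *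
    (1 - (1 - pl) ^ (N - 1) * (1 - ph)) ^ (t - k)

/-- The cooperation throughput `τ_c = pl (1 - pl)^{N-1}`. -/
noncomputable def tauC (N : ℕ) (pl : ℝ) : ℝ := pl * (1 - pl) ^ (N - 1)

/-- The defection throughput `τ_d = ph (1 - pl)^{N-1}`. -/
noncomputable def tauD (N : ℕ) (pl ph : ℝ) : ℝ := ph * (1 - pl) ^ (N - 1)

/-- `f : {0,…,t} → [0,1]` is an intervention rule. -/
def IsRule (t : ℕ) (f : ℕ → ℝ) : Prop := ∀ k ≤ t, 0 ≤ f k ∧ f k ≤ 1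

/-- The left-hand side of the incentive constraint:
`((T−t)/T) · Σ_{k=0}^t [τ_d μ(k;t) − τ_c λ(k;t)] f(k)`. -/
noncomputable def incLHS (N t T : ℕ) (pl ph : ℝ) (f : ℕ → ℝ) : ℝ :=
  (((T : ℝ) - t) / T) * ∑ k ∈ Finset.range (t + 1),
    (tauD N pl ph * mu N t pl ph k - tauC N pl * lam N t pl k) * f k

/-- A feasible solution of the linear program: an intervention rule satisfying the
incentive constraint. -/
def Feasible (N t T : ℕ) (pl ph : ℝ) (f : ℕ → ℝ) : Prop :=
  IsRule t f ∧ incLHS N t T pl ph f ≥ tauD N pl ph - tauC N pl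

/-- The objective of the linear program: the expected transmission probability of the
intervention device under cooperation, `Σ_{k=0}^t λ(k;t) f(k)`. -/
noncomputable def objective (N t : ℕ) (pl : ℝ) (f : ℕ → ℝ) : ℝ :=
  ∑ k ∈ Finset.range (t + 1), lam N t pl k * f k

/-- The threshold intervention rule of Proposition 1: `f*(k) = 1` for `k < k̄`,
`f*(k) = 0` for `k > k̄`, and at `k = k̄` the value making the incentive constraint
bind. -/
noncomputable def thresholdRule (N t T : ℕ) (pl ph : ℝ) (kbar : ℕ) : ℕ → ℝ :=
  fun k =>
    if k < kbar then 1
    else if k = kbar then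
      ((T : ℝ) / ((T : ℝ) - t) * (tauD N pl ph - tauC N pl) -
          ∑ j ∈ Finset.range kbar,
            (tauD N pl ph * mu N t pl ph j - tauC N pl * lam N t pl j)) /
        (tauD N pl ph * mu N t pl ph kbar - tauC N pl * lam N t pl kbar)
    else 0

/-!
Write `gain k = τ_d μ(k;t) − τ_c λ(k;t)`. Up to the positive factor `(1−p_l)^{N−1} C(t,k)`,
`gain k > 0` says `p_l b^k (1−b)^{t−k} < p_h a^k (1−a)^{t−k}` with `a = (1−p_l)^{N−1}(1−p_h)`
and `b = (1−p_l)^N`. Since `a < b`, the likelihood ratio `(b/a)^k ((1−b)/(1−a))^{t−k}` increases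
with `k`, so `gain > 0` on all of `{0, …, k₀}`. The partial sums of `gain` therefore increase up to `k₀`,
the first one to reach the target `T/(T−t) · (τ_d − τ_c)` defines `k̄`, and `f*(k̄)` is the
fraction of `gain k̄` still missing from the target after summing `gain` below `k̄`.
-/

lemma exists_min_succ_ge {α : Type*} [LinearOrder α] (P : ℕ → α) {y : α} {n : ℕ}
    (h0 : P 0 < y) (hn : y ≤ P (n + 1)) :
    ∃ m ≤ n, y ≤ P (m + 1) ∧ (∀ m' < m, P (m' + 1) < y) ∧ P m < y := by
  classical
  have hex : ∃ m, y ≤ P (m + 1) := ⟨n, hn⟩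
  have hmin : ∀ m' < Nat.find hex, P (m' + 1) < y := fun m' hm' =>
    not_le.mp (Nat.find_min hex hm')
  refine ⟨Nat.find hex, Nat.find_min' hex hn, Nat.find_spec hex, hmin, ?_⟩
  rcases Nat.eq_zero_or_eq_succ_pred (Nat.find hex) with h | h
  · rwa [h]
  · rw [h]
    exact hmin _ (by omega)

lemma fill_fraction {c S g y : ℝ} (hc : 0 < c) (hg : 0 < g) (hlt : c * S < y)
    (hle : y ≤ c * (S + g)) :
    0 ≤ (c⁻¹ * y - S) / g ∧ (c⁻¹ * y - S) / g ≤ 1 ∧ c * (S + g * ((c⁻¹ * y - S) / g)) = y := by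
  have hS : S < c⁻¹ * y := by rwa [lt_inv_mul_iff₀ hc]
  have hSg : c⁻¹ * y ≤ S + g := by rwa [inv_mul_le_iff₀ hc]
  refine ⟨div_nonneg (by linarith) hg.le, (div_le_one hg).mpr (by linarith), ?_⟩
  rw [mul_div_cancel₀ _ hg.ne', add_sub_cancel, mul_inv_cancel_left₀ hc.ne']

lemma binomial_weight_lt_of_succ {p q a b : ℝ} {k s : ℕ} (hq : 0 < q) (ha : 0 < a)
    (hab : a ≤ b) (hb : b < 1)
    (h : p * b ^ (k + 1) * (1 - b) ^ s < q * a ^ (k + 1) * (1 - a) ^ s) :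
    p * b ^ k * (1 - b) ^ (s + 1) < q * a ^ k * (1 - a) ^ (s + 1) := by
  have ha1 : 0 < 1 - a := by linarith
  have hcross : a * (1 - b) ≤ b * (1 - a) := by nlinarith
  refine lt_of_mul_lt_mul_left ?_ (mul_pos ha (ha.trans_le hab)).le
  calc a * b * (p * b ^ k * (1 - b) ^ (s + 1))
      = a * (1 - b) * (p * b ^ (k + 1) * (1 - b) ^ s) := by ring
    _ < a * (1 - b) * (q * a ^ (k + 1) * (1 - a) ^ s) :=
        mul_lt_mul_of_pos_left h (mul_pos ha (by linarith))
    _ ≤ b * (1 - a) * (q * a ^ (k + 1) * (1 - a) ^ s) :=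
        mul_le_mul_of_nonneg_right hcross (by positivity)
    _ = a * b * (q * a ^ k * (1 - a) ^ (s + 1)) := by ring

noncomputable def gain (N t : ℕ) (pl ph : ℝ) (k : ℕ) : ℝ :=
  tauD N pl ph * mu N t pl ph k - tauC N pl * lam N t pl k

lemma gain_eq (N t : ℕ) (pl ph : ℝ) (k : ℕ) :
    gain N t pl ph k = (1 - pl) ^ (N - 1) * t.choose k *
      (ph * ((1 - pl) ^ (N - 1) * (1 - ph)) ^ k * (1 - (1 - pl) ^ (N - 1) * (1 - ph)) ^ (t - k) -
        pl * ((1 - pl) ^ N) ^ k * (1 - (1 - pl) ^ N) ^ (t - k)) := by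
  unfold gain tauD tauC mu lam
  ring

lemma gain_pos_iff {N t k : ℕ} {pl ph : ℝ} (hpl1 : pl < 1) (hk : k ≤ t) :
    0 < gain N t pl ph k ↔
      pl * ((1 - pl) ^ N) ^ k * (1 - (1 - pl) ^ N) ^ (t - k) <
        ph * ((1 - pl) ^ (N - 1) * (1 - ph)) ^ k * (1 - (1 - pl) ^ (N - 1) * (1 - ph)) ^ (t - k) := by
  have hfac : 0 < (1 - pl) ^ (N - 1) * (t.choose k : ℝ) :=
    mul_pos (pow_pos (by linarith) _) (by exact_mod_cast Nat.choose_pos hk)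
  rw [gain_eq, mul_pos_iff_of_pos_left hfac, sub_pos]

lemma gain_pos_of_succ {N t k : ℕ} {pl ph : ℝ} (hN : 1 ≤ N) (hpl : 0 < pl) (hlh : pl < ph)
    (hph : ph < 1) (hkt : k + 1 ≤ t) (h : 0 < gain N t pl ph (k + 1)) :
    0 < gain N t pl ph k := by
  have hA : 0 < (1 - pl) ^ (N - 1) := pow_pos (by linarith) _
  have hpowN : (1 - pl) ^ N = (1 - pl) ^ (N - 1) * (1 - pl) := by
    rw [← pow_succ, Nat.sub_add_cancel hN]
  rw [gain_pos_iff (hlh.trans hph) hkt] at h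
  rw [gain_pos_iff (hlh.trans hph) (by omega), show t - k = t - (k + 1) + 1 by omega]
  refine binomial_weight_lt_of_succ (hpl.trans hlh) (mul_pos hA (by linarith)) ?_ ?_ h
  · rw [hpowN]
    exact mul_le_mul_of_nonneg_left (by linarith) hA.le
  · exact pow_lt_one₀ (by linarith) (by linarith) (by omega)

lemma gain_pos_of_le {N t k k0 : ℕ} {pl ph : ℝ} (hN : 1 ≤ N) (hpl : 0 < pl) (hlh : pl < ph)
    (hph : ph < 1) (hk0t : k0 ≤ t) (hk0 : 0 < gain N t pl ph k0) (hk : k ≤ k0) :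
    0 < gain N t pl ph k := by
  induction hk using Nat.decreasingInduction with
  | self => exact hk0
  | of_succ k hk ih => exact gain_pos_of_succ hN hpl hlh hph (by omega) ih

lemma tauC_lt_tauD {N : ℕ} {pl ph : ℝ} (hlh : pl < ph) (hpl1 : pl < 1) :
    tauC N pl < tauD N pl ph := by
  unfold tauC tauD
  exact mul_lt_mul_of_pos_right hlh (pow_pos (by linarith) _)

section thresholdRule

variable {N t T : ℕ} {pl ph : ℝ} {kbar : ℕ}

lemma thresholdRule_self :
    thresholdRule N t T pl ph kbar kbar =
      ((((T : ℝ) - t) / T)⁻¹ * (tauD N pl ph - tauC N pl) -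
          ∑ j ∈ range kbar, gain N t pl ph j) / gain N t pl ph kbar := by
  simp [thresholdRule, gain, inv_div]

lemma sum_mul_thresholdRule (g : ℕ → ℝ) (hkbar : kbar ≤ t) :
    ∑ k ∈ range (t + 1), g k * thresholdRule N t T pl ph kbar k =
      ∑ k ∈ range kbar, g k + g kbar * thresholdRule N t T pl ph kbar kbar := by
  have hzero : ∀ k ∈ range (t + 1), k ∉ range (kbar + 1) →
      g k * thresholdRule N t T pl ph kbar k = 0 := by
    intro k _ hk
    rw [mem_range] at hk
    simp [thresholdRule, show ¬k < kbar by omega, show k ≠ kbar by omega]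
  rw [← sum_subset (range_subset_range.mpr (by omega)) hzero, sum_range_succ]
  congr 1
  exact sum_congr rfl fun k hk => by simp [thresholdRule, mem_range.mp hk]

lemma isRule_thresholdRule (h0 : 0 ≤ thresholdRule N t T pl ph kbar kbar)
    (h1 : thresholdRule N t T pl ph kbar kbar ≤ 1) :
    IsRule t (thresholdRule N t T pl ph kbar) := by
  intro k _
  rcases lt_trichotomy k kbar with hk | rfl | hk
  · simp [thresholdRule, hk]
  · exact ⟨h0, h1⟩
  · simp [thresholdRule, hk.ne', hk.not_gt]

end thresholdRule

theorem threshold_rule_well_defined_general (N t T : ℕ) (pl ph : ℝ) (hN : 2 ≤ N)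
    (hpl : pl = 1 / N) (hlh : pl < ph) (hph : ph < 1) (htT : t < T)
    (k0 : ℕ) (hk0t : k0 ≤ t)
    (hk0pos : 0 < tauD N pl ph * mu N t pl ph k0 - tauC N pl * lam N t pl k0)
    (hfeasLP : (((T : ℝ) - t) / T) * ∑ k ∈ Finset.range (k0 + 1),
        (tauD N pl ph * mu N t pl ph k - tauC N pl * lam N t pl k)
      ≥ tauD N pl ph - tauC N pl) :
    ∃ kbar ≤ k0,
      ((((T : ℝ) - t) / T) * ∑ k ∈ Finset.range (kbar + 1),
          (tauD N pl ph * mu N t pl ph k - tauC N pl * lam N t pl k)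
        ≥ tauD N pl ph - tauC N pl) ∧
      (∀ k' < kbar, (((T : ℝ) - t) / T) * ∑ k ∈ Finset.range (k' + 1),
          (tauD N pl ph * mu N t pl ph k - tauC N pl * lam N t pl k)
        < tauD N pl ph - tauC N pl) ∧
      0 ≤ thresholdRule N t T pl ph kbar kbar ∧
      thresholdRule N t T pl ph kbar kbar ≤ 1 ∧
      incLHS N t T pl ph (thresholdRule N t T pl ph kbar) =
        tauD N pl ph - tauC N pl ∧
      Feasible N t T pl ph (thresholdRule N t T pl ph kbar) := by
  have hpl0 : 0 < pl := by
    rw [hpl]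
    exact one_div_pos.mpr (by exact_mod_cast (by omega : 0 < N))
  have hc : 0 < ((T : ℝ) - t) / T :=
    div_pos (sub_pos.mpr (by exact_mod_cast htT)) (by exact_mod_cast (by omega : 0 < T))
  have hgain : ∀ k ≤ k0, 0 < gain N t pl ph k := fun k hk =>
    gain_pos_of_le (by omega) hpl0 hlh hph hk0t hk0pos hk
  obtain ⟨kbar, hkbar, hge, hmin, hlt⟩ :=
    exists_min_succ_ge (fun n => ((T : ℝ) - t) / T * ∑ k ∈ range n, gain N t pl ph k)
      (by simpa using tauC_lt_tauD hlh (hlh.trans hph)) hfeasLP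
  rw [sum_range_succ] at hge
  obtain ⟨h0, h1, heq⟩ := fill_fraction hc (hgain kbar hkbar) hlt hge
  rw [← thresholdRule_self] at h0 h1 heq
  have hinc :
      incLHS N t T pl ph (thresholdRule N t T pl ph kbar) = tauD N pl ph - tauC N pl := by
    rw [incLHS, sum_mul_thresholdRule _ (hkbar.trans hk0t)]
    exact heq
  refine ⟨kbar, hkbar, ?_, hmin, h0, h1, hinc, isRule_thresholdRule h0 h1, hinc.ge⟩
  rw [sum_range_succ]
  exact hge

/-- (Proposition 1, structure of the optimum, well-definedness) If the linear program
is feasible, then `k̄ = min{k' : ((T−t)/T)·Σ_{k ≤ k'} [τ_d μ(k;t) − τ_c λ(k;t)] ≥ τ_d − τ_c}`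
exists, `k̄ ≤ k₀`, the value `f*(k̄)` of the threshold rule lies in `[0,1]`, and `f*`
satisfies the incentive constraint with equality; in particular `f*` is feasible. -/
theorem threshold_rule_well_defined (N t T : ℕ) (pl ph : ℝ) (hN : 2 ≤ N)
    (hpl : pl = 1 / N) (hlh : pl < ph) (hph : ph < 1) (ht : 1 ≤ t) (htT : t < T)
    (k0 : ℕ) (hk0t : k0 ≤ t)
    (hk0pos : 0 < tauD N pl ph * mu N t pl ph k0 - tauC N pl * lam N t pl k0)
    (hk0max : ∀ k ≤ t,
      0 < tauD N pl ph * mu N t pl ph k - tauC N pl * lam N t pl k → k ≤ k0)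
    (hfeasLP : (((T : ℝ) - t) / T) * ∑ k ∈ Finset.range (k0 + 1),
        (tauD N pl ph * mu N t pl ph k - tauC N pl * lam N t pl k)
      ≥ tauD N pl ph - tauC N pl) :
    ∃ kbar ≤ k0,
      ((((T : ℝ) - t) / T) * ∑ k ∈ Finset.range (kbar + 1),
          (tauD N pl ph * mu N t pl ph k - tauC N pl * lam N t pl k)
        ≥ tauD N pl ph - tauC N pl) ∧
      (∀ k' < kbar, (((T : ℝ) - t) / T) * ∑ k ∈ Finset.range (k' + 1),
          (tauD N pl ph * mu N t pl ph k - tauC N pl * lam N t pl k)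
        < tauD N pl ph - tauC N pl) ∧
      0 ≤ thresholdRule N t T pl ph kbar kbar ∧
      thresholdRule N t T pl ph kbar kbar ≤ 1 ∧
      incLHS N t T pl ph (thresholdRule N t T pl ph kbar) =
        tauD N pl ph - tauC N pl ∧
      Feasible N t T pl ph (thresholdRule N t T pl ph kbar) :=
  threshold_rule_well_defined_general N t T pl ph hN hpl hlh hph htT k0 hk0t hk0pos hfeasLP
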